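/- arXiv:1803.11500 — 3 statements merged into one kernel-verified Lean document; each statement's English description precedes it below -/
import Mathlib

section
/- (Gaussian Stokes identity.) Let f ∈ ℝ[x,ω] with ω a single real variable, and for fixed x let K_x = {ω ∈ ℝ : f(x,ω) ≤ 0}. Let μ_{a,σ} be the Gaussian measure on ℝ with mean a and standard deviation σ > 0. Then for every β ∈ ℕ, ∫_{K_x} q_β(x,ω,a,σ) dμ_{a,σ}(ω) = 0, where q_β(x,ω,a,σ) := σ² ∂/∂ω [ω^β f(x,ω)] − ω^β f(x,ω)(ω − a). -/
/-! Write `P = f(x, ·)`, `W = ω ^ β * P` and `φ` for the Gaussian density, so that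
`σ² φ' = -(ω - a) φ` and the integrand times `φ` is `σ² (W φ)'`. The continuous function
`g = ω ^ β * min P 0` equals `W` on `K_x`, vanishes off `K_x`, and is differentiable off the
finitely many roots of `P` with derivative `W'` on `K_x` and `0` off it. Hence the integral is
`σ² ∫ (g φ)'` over all of `ℝ`, which vanishes because `|g φ| ≤ |W φ| → 0` at `±∞`.
-/

open MeasureTheory MvPolynomial ProbabilityTheory Filter Topology
open scoped NNReal

open Polynomial in
noncomputable def MvPolynomial.evalInl {R σ : Type*} [CommSemiring R] (x : σ → R) :
    MvPolynomial (σ ⊕ Fin 1) R →ₐ[R] R[X] :=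
  aeval (Sum.elim (fun i => Polynomial.C (x i)) fun _ => Polynomial.X)

namespace MvPolynomial

variable {R σ : Type*} [CommSemiring R] (x : σ → R)

@[simp]
theorem evalInl_X_inl (i : σ) : evalInl x (X (Sum.inl i)) = Polynomial.C (x i) := aeval_X _ _

@[simp]
theorem evalInl_X_inr (k : Fin 1) : evalInl x (X (Sum.inr k)) = Polynomial.X := aeval_X _ _

theorem eval_evalInl (g : MvPolynomial (σ ⊕ Fin 1) R) (ω : R) :
    (evalInl x g).eval ω = eval (Sum.elim x fun _ => ω) g := by
  induction g using MvPolynomial.induction_on with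
  | C r => simp [evalInl]
  | add p q hp hq => simp [hp, hq]
  | mul_X p i hp => cases i <;> simp [hp]

theorem derivative_evalInl (g : MvPolynomial (σ ⊕ Fin 1) R) :
    Polynomial.derivative (evalInl x g) = evalInl x (pderiv (Sum.inr 0) g) := by
  induction g using MvPolynomial.induction_on with
  | C r => simp [evalInl]
  | add p q hp hq => simp [hp, hq]
  | mul_X p i hp =>
    rcases i with j | k
    · simp [← hp, pderiv_X_of_ne (Sum.inl_ne_inr (b := (0 : Fin 1))), mul_comm]
    · obtain rfl : k = 0 := Subsingleton.elim _ _
      simp [← hp, mul_comm]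

end MvPolynomial

theorem integral_of_hasDerivAt_off_countable_of_tendsto {E : Type*}
    [NormedAddCommGroup E] [NormedSpace ℝ E] [CompleteSpace E] {f f' : ℝ → E} {s : Set ℝ}
    {m n : E} (hs : s.Countable) (hf : Continuous f) (hderiv : ∀ x ∉ s, HasDerivAt f (f' x) x)
    (hf' : Integrable f') (hbot : Tendsto f atBot (𝓝 m)) (htop : Tendsto f atTop (𝓝 n)) :
    ∫ x, f' x = n - m := by
  have hFTC : ∀ t : ℝ, ∫ x in -t..t, f' x = f t - f (-t) := fun t =>
    integral_eq_of_hasDerivAt_off_countable f f' hs hf.continuousOn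
      (fun x hx => hderiv x hx.2) hf'.intervalIntegrable
  refine tendsto_nhds_unique (intervalIntegral_tendsto_integral hf' tendsto_neg_atTop_atBot
    tendsto_id) ?_
  simpa only [id, hFTC, Function.comp_def] using htop.sub (hbot.comp tendsto_neg_atTop_atBot)

namespace ProbabilityTheory

variable {μ : ℝ} {v : ℝ≥0}

theorem hasDerivAt_gaussianPDFReal (x : ℝ) :
    HasDerivAt (gaussianPDFReal μ v) (-(x - μ) / v * gaussianPDFReal μ v x) x := by
  have hexp : HasDerivAt (fun y => -(y - μ) ^ 2 / (2 * v)) (-(x - μ) / v) x := by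
    refine ((((hasDerivAt_id x).sub_const μ).pow 2).neg.div_const (2 * (v : ℝ))).congr_deriv ?_
    simp only [id]
    ring
  rw [gaussianPDFReal_def]
  exact (hexp.exp.const_mul (√(2 * Real.pi * v))⁻¹).congr_deriv (by ring)

theorem continuous_gaussianPDFReal : Continuous (gaussianPDFReal μ v) :=
  continuous_iff_continuousAt.2 fun x => (hasDerivAt_gaussianPDFReal x).continuousAt

theorem integrable_gaussianPDFReal_mul_iff (hv : v ≠ 0) {g : ℝ → ℝ} :
    Integrable (fun x => gaussianPDFReal μ v x * g x) ↔ Integrable g (gaussianReal μ v) := by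
  rw [gaussianReal_of_var_ne_zero _ hv, integrable_withDensity_iff_integrable_smul'
    (measurable_gaussianPDF μ v) (ae_of_all _ fun _ => gaussianPDF_lt_top)]
  simp [gaussianPDF, gaussianPDFReal_nonneg]

theorem integral_stein_gaussianReal_eq_zero (hv : v ≠ 0) {g g' : ℝ → ℝ} {s : Set ℝ}
    (hs : s.Countable) (hg : Continuous g) (hderiv : ∀ x ∉ s, HasDerivAt g (g' x) x)
    (hint : Integrable (fun x => v * g' x - g x * (x - μ)) (gaussianReal μ v))
    (hbot : Tendsto (fun x => g x * gaussianPDFReal μ v x) atBot (𝓝 0))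
    (htop : Tendsto (fun x => g x * gaussianPDFReal μ v x) atTop (𝓝 0)) :
    ∫ x, v * g' x - g x * (x - μ) ∂gaussianReal μ v = 0 := by
  have hv' : (v : ℝ) ≠ 0 := by exact_mod_cast hv
  rw [integral_gaussianReal_eq_integral_smul hv]
  refine (integral_of_hasDerivAt_off_countable_of_tendsto (f := fun x =>
      v * (g x * gaussianPDFReal μ v x)) hs
    (continuous_const.mul (hg.mul continuous_gaussianPDFReal)) (fun x hx => ?_)
    ((integrable_gaussianPDFReal_mul_iff hv).2 hint) (by simpa using hbot.const_mul (v : ℝ))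
    (by simpa using htop.const_mul (v : ℝ))).trans (sub_self 0)
  refine (((hderiv x hx).mul (hasDerivAt_gaussianPDFReal x)).const_mul (v : ℝ)).congr_deriv ?_
  field_simp
  ring

end ProbabilityTheory

theorem HasDerivAt.min_zero {p : ℝ → ℝ} {p' x : ℝ} (hp : HasDerivAt p p' x)
    (hx : p x ≠ 0) :
    HasDerivAt (fun y => min (p y) 0) (if p x ≤ 0 then p' else 0) x := by
  rcases hx.lt_or_gt with hneg | hpos
  · have heq : (fun y => min (p y) 0) =ᶠ[𝓝 x] p := by
      filter_upwards [hp.continuousAt.eventually_lt_const hneg] with y hy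
      exact min_eq_left hy.le
    rw [if_pos hneg.le]
    exact hp.congr_of_eventuallyEq heq
  · have heq : (fun y => min (p y) 0) =ᶠ[𝓝 x] fun _ => 0 := by
      filter_upwards [hp.continuousAt.eventually_const_lt hpos] with y hy
      exact min_eq_right hy.le
    rw [if_neg hpos.not_ge]
    exact (hasDerivAt_const x 0).congr_of_eventuallyEq heq

namespace Polynomial

variable {μ : ℝ} {v : ℝ≥0}

theorem integrable_eval_gaussianReal (P : ℝ[X]) :
    Integrable (fun x => P.eval x) (gaussianReal μ v) := by
  simp_rw [eval_eq_sum_range]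
  refine integrable_finsetSum _ fun i _ => Integrable.const_mul ?_ _
  exact integrable_pow_of_integrable_exp_mul one_ne_zero (X := id)
    (integrable_exp_mul_gaussianReal 1) (integrable_exp_mul_gaussianReal (-1)) i

theorem integrable_eval_mul_gaussianPDFReal (hv : v ≠ 0) (P : ℝ[X]) :
    Integrable (fun x => P.eval x * gaussianPDFReal μ v x) := by
  simpa only [mul_comm] using (integrable_gaussianPDFReal_mul_iff hv).2
    (P.integrable_eval_gaussianReal (μ := μ))

theorem hasDerivAt_eval_mul_gaussianPDFReal (P : ℝ[X]) (x : ℝ) :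
    HasDerivAt (fun x => P.eval x * gaussianPDFReal μ v x)
      ((derivative P - C (v : ℝ)⁻¹ * (X - C μ) * P).eval x * gaussianPDFReal μ v x) x := by
  refine ((P.hasDerivAt x).mul (hasDerivAt_gaussianPDFReal x)).congr_deriv ?_
  simp only [eval_sub, eval_mul, eval_C, eval_X]
  ring

theorem tendsto_eval_mul_gaussianPDFReal_atTop (hv : v ≠ 0) (P : ℝ[X]) :
    Tendsto (fun x => P.eval x * gaussianPDFReal μ v x) atTop (𝓝 0) :=
  tendsto_zero_of_hasDerivAt_of_integrableOn_Ioi (a := 0)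
    (fun x _ => P.hasDerivAt_eval_mul_gaussianPDFReal x)
    (integrable_eval_mul_gaussianPDFReal hv _).integrableOn
    (integrable_eval_mul_gaussianPDFReal hv P).integrableOn

theorem tendsto_eval_mul_gaussianPDFReal_atBot (hv : v ≠ 0) (P : ℝ[X]) :
    Tendsto (fun x => P.eval x * gaussianPDFReal μ v x) atBot (𝓝 0) :=
  tendsto_zero_of_hasDerivAt_of_integrableOn_Iic (a := 0)
    (fun x _ => P.hasDerivAt_eval_mul_gaussianPDFReal x)
    (integrable_eval_mul_gaussianPDFReal hv _).integrableOn
    (integrable_eval_mul_gaussianPDFReal hv P).integrableOn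

theorem setIntegral_stein_gaussianReal_eq_zero (hv : v ≠ 0) (P Q : ℝ[X]) :
    ∫ x in {x | P.eval x ≤ 0},
      v * (derivative (Q * P)).eval x - (Q * P).eval x * (x - μ) ∂gaussianReal μ v = 0 := by
  rcases eq_or_ne P 0 with rfl | hP
  · simp
  set K := {x | P.eval x ≤ 0}
  have hK : MeasurableSet K := measurableSet_le P.continuous.measurable measurable_const
  set g : ℝ → ℝ := fun x => Q.eval x * min (P.eval x) 0
  set g' : ℝ → ℝ := K.indicator fun x => (derivative (Q * P)).eval x
  have hindicator :
      K.indicator (fun x => v * (derivative (Q * P)).eval x - (Q * P).eval x * (x - μ)) =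
        fun x => v * g' x - g x * (x - μ) := by
    ext x
    by_cases hx : P.eval x ≤ 0
    · simp [g, g', K, hx]
    · simp [g, g', K, hx, min_eq_right (not_le.1 hx).le]
  have hint : Integrable (fun x => v * (derivative (Q * P)).eval x - (Q * P).eval x * (x - μ))
      (gaussianReal μ v) := by
    refine (integrable_eval_gaussianReal
      (C (v : ℝ) * derivative (Q * P) - Q * P * (X - C μ))).congr (ae_of_all _ fun x => ?_)
    simp only [eval_sub, eval_mul, eval_C, eval_X]
  have hbound (x : ℝ) :
      ‖g x * gaussianPDFReal μ v x‖ ≤ ‖(Q * P).eval x * gaussianPDFReal μ v x‖ := by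
    have : |min (P.eval x) 0| ≤ |P.eval x| := by
      rcases le_total (P.eval x) 0 with h | h <;> simp [h]
    simp only [g, norm_mul, eval_mul, Real.norm_eq_abs]
    gcongr
  rw [← integral_indicator hK, hindicator]
  refine integral_stein_gaussianReal_eq_zero hv (P.finite_setOfPred_isRoot hP).countable
    (by fun_prop) (fun x hx => ?_) (hindicator ▸ hint.indicator hK)
    (squeeze_zero_norm hbound
      (by simpa using ((Q * P).tendsto_eval_mul_gaussianPDFReal_atBot hv).norm))
    (squeeze_zero_norm hbound
      (by simpa using ((Q * P).tendsto_eval_mul_gaussianPDFReal_atTop hv).norm))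
  refine ((Q.hasDerivAt x).mul ((P.hasDerivAt x).min_zero hx)).congr_deriv ?_
  by_cases h : P.eval x ≤ 0
  · simp [g', K, h]
  · simp [g', K, h, min_eq_right (not_le.1 h).le]

end Polynomial

/-- Gaussian Stokes identity: for a polynomial `f ∈ ℝ[x,ω]` (with `ω` a single real
variable), `x` fixed, `K_x = {ω : f(x,ω) ≤ 0}`, and the Gaussian measure `μ_{a,σ}`
on `ℝ` with mean `a` and standard deviation `σ > 0`, one has for every `β ∈ ℕ`:
`∫_{K_x} q_β(x,ω,a,σ) dμ_{a,σ}(ω) = 0`, where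
`q_β(x,ω,a,σ) = σ² ∂/∂ω [ω^β f(x,ω)] − ω^β f(x,ω)(ω − a)`. -/
theorem gaussian_stokes_identity {n : ℕ}
    (f : MvPolynomial (Fin n ⊕ Fin 1) ℝ)
    (x : Fin n → ℝ) (a σ : ℝ) (hσ : 0 < σ)
    (Kx : Set ℝ)
    (hKx : Kx = {ω : ℝ | MvPolynomial.eval (Sum.elim x fun _ => ω) f ≤ 0}) :
    ∀ β : ℕ,
      (∫ ω in Kx,
        (σ ^ 2 *
          MvPolynomial.eval (Sum.elim x fun _ => ω)
            (MvPolynomial.pderiv (Sum.inr 0) ((X (Sum.inr 0)) ^ β * f)) -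
          ω ^ β * MvPolynomial.eval (Sum.elim x fun _ => ω) f * (ω - a))
        ∂(gaussianReal a ⟨σ ^ 2, sq_nonneg σ⟩)) = 0 := by
  intro β
  have hv : (⟨σ ^ 2, sq_nonneg σ⟩ : ℝ≥0) ≠ 0 := fun h =>
    (pow_pos hσ 2).ne' (congrArg NNReal.toReal h)
  have hderiv (ω : ℝ) :
      eval (Sum.elim x fun _ => ω) (pderiv (Sum.inr 0) (X (Sum.inr 0) ^ β * f)) =
        (Polynomial.derivative (Polynomial.X ^ β * evalInl x f)).eval ω := by
    rw [← eval_evalInl, ← derivative_evalInl, map_mul, map_pow, evalInl_X_inr]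
  subst hKx
  simp only [hderiv, ← eval_evalInl x f]
  have key := Polynomial.setIntegral_stein_gaussianReal_eq_zero (μ := a) hv (evalInl x f)
    (Polynomial.X ^ β)
  simp only [Polynomial.eval_mul, Polynomial.eval_pow, Polynomial.eval_X] at key
  exact key
end

section
/- (Mixtures with bounded-density conditionals give absolutely continuous conditional identification.) Let ν be a positive measure on X × A whose x-marginal ν_x satisfies dν_x = η(x) dλ for some measurable 0 ≤ η ≤ 1, and suppose for a measurable map x ↦ a(x) ∈ A and all α ∈ ℕⁿ, γ ∈ ℕᵗ: ∫ x^α a^γ dν(x,a) = ∫_X x^α a(x)^γ η(x) dλ(x). If A ⊂ ℝᵗ is compact, then the conditional probability ν̂(da|x) of ν given x equals the Dirac measure δ_{a(x)} for ν_x-almost every x. -/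
/-!
The graph measure `ν' = ν_x.map (x ↦ (x, a(x)))` is the disintegration `ν_x ⊗ δ_{a(x)}`, and the
moment hypothesis says exactly that `ν` and `ν'` have the same mixed moments. Both measures live
on the compact set `X × A`, where by Stone–Weierstrass the polynomials are uniformly dense in the
continuous functions, so the two finite measures agree on every bounded continuous function and
hence coincide. Uniqueness of disintegration then identifies `ν.condKernel x` with `δ_{a(x)}`.
-/

open MeasureTheory ProbabilityTheory

section MomentDeterminacy

variable {E : Type*} [MeasurableSpace E] {μ ν : Measure E} {K : Set E}

theorem norm_integral_sub_le_of_forall_mem [IsFiniteMeasure μ] (hμ : μ Kᶜ = 0) {f g : E → ℝ}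
    (hf : Integrable f μ) (hg : Integrable g μ) {ε : ℝ} (h : ∀ x ∈ K, ‖f x - g x‖ ≤ ε) :
    ‖∫ x, f x ∂μ - ∫ x, g x ∂μ‖ ≤ ε * μ.real Set.univ := by
  rw [← integral_sub hf hg]
  refine norm_integral_le_of_norm_le_const ?_
  filter_upwards [measure_eq_zero_iff_ae_notMem.mp hμ] with x hx
  exact h x (by simpa using hx)

variable [TopologicalSpace E]

theorem Continuous.integrable_of_isCompact_of_measure_compl_eq_zero [OpensMeasurableSpace E]
    [IsFiniteMeasure μ] (hK : IsCompact K) (hμ : μ Kᶜ = 0) {f : E → ℝ} (hf : Continuous f) :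
    Integrable f μ := by
  obtain ⟨C, hC⟩ := hK.exists_bound_of_continuousOn hf.continuousOn
  refine ⟨hf.aestronglyMeasurable, HasFiniteIntegral.of_bounded (C := C) ?_⟩
  filter_upwards [measure_eq_zero_iff_ae_notMem.mp hμ] with x hx
  exact hC x (by simpa using hx)

theorem integral_eq_of_forall_mem_subalgebra_integral_eq [OpensMeasurableSpace E]
    [IsFiniteMeasure μ] [IsFiniteMeasure ν] (hK : IsCompact K) (hμ : μ Kᶜ = 0) (hν : ν Kᶜ = 0)
    {B : Subalgebra ℝ C(E, ℝ)} (hB : B.SeparatesPoints)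
    (heq : ∀ p ∈ B, ∫ x, p x ∂μ = ∫ x, p x ∂ν) (f : C(E, ℝ)) :
    ∫ x, f x ∂μ = ∫ x, f x ∂ν := by
  have hint {μ : Measure E} [IsFiniteMeasure μ] (hμ : μ Kᶜ = 0) (g : C(E, ℝ)) :
      Integrable g μ :=
    g.continuous.integrable_of_isCompact_of_measure_compl_eq_zero hK hμ
  refine eq_of_forall_dist_le fun δ hδ => ?_
  set c := μ.real Set.univ + ν.real Set.univ
  obtain ⟨p, hpB, hp⟩ :=
    ContinuousMap.exists_mem_subalgebra_near_continuous_of_isCompact_of_separatesPoints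
      hB f hK (ε := δ / (c + 1)) (by positivity)
  have hfp : ∀ x ∈ K, ‖f x - p x‖ ≤ δ / (c + 1) := fun x hx =>
    (norm_sub_rev (f x) (p x) ▸ hp x hx).le
  calc dist (∫ x, f x ∂μ) (∫ x, f x ∂ν)
      = ‖(∫ x, f x ∂μ - ∫ x, p x ∂μ) - (∫ x, f x ∂ν - ∫ x, p x ∂ν)‖ := by
        rw [dist_eq_norm, heq p hpB, sub_sub_sub_cancel_right]
    _ ≤ δ / (c + 1) * μ.real Set.univ + δ / (c + 1) * ν.real Set.univ :=
        (norm_sub_le _ _).trans (add_le_add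
          (norm_integral_sub_le_of_forall_mem hμ (hint hμ f) (hint hμ p) hfp)
          (norm_integral_sub_le_of_forall_mem hν (hint hν f) (hint hν p) hfp))
    _ = δ * (c / (c + 1)) := by ring
    _ ≤ δ := mul_le_of_le_one_right hδ.le ((div_le_one (by positivity)).mpr (by linarith))

theorem ext_of_forall_mem_closure_integral_eq_of_isCompact [BorelSpace E] [HasOuterApproxClosed E]
    [IsFiniteMeasure μ] [IsFiniteMeasure ν] (hK : IsCompact K) (hμ : μ Kᶜ = 0) (hν : ν Kᶜ = 0)
    {S : Set C(E, ℝ)} (hS : (Algebra.adjoin ℝ S).SeparatesPoints)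
    (heq : ∀ m ∈ Submonoid.closure S, ∫ x, m x ∂μ = ∫ x, m x ∂ν) : μ = ν := by
  have hint {μ : Measure E} [IsFiniteMeasure μ] (hμ : μ Kᶜ = 0) (g : C(E, ℝ)) :
      Integrable g μ :=
    g.continuous.integrable_of_isCompact_of_measure_compl_eq_zero hK hμ
  have hadjoin : ∀ p ∈ Algebra.adjoin ℝ S, ∫ x, p x ∂μ = ∫ x, p x ∂ν := by
    intro p hp
    rw [← Subalgebra.mem_toSubmodule, Algebra.adjoin_eq_span] at hp
    induction hp using Submodule.span_induction with
    | mem m hm => exact heq m hm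
    | zero => simp
    | add a b _ _ ha hb =>
      simp only [ContinuousMap.add_apply]
      rw [integral_add (hint hμ a) (hint hμ b), integral_add (hint hν a) (hint hν b), ha, hb]
    | smul r a _ ha =>
      simp only [ContinuousMap.smul_apply, smul_eq_mul]
      rw [integral_const_mul, integral_const_mul, ha]
  exact ext_of_forall_integral_eq_of_IsFiniteMeasure fun f =>
    integral_eq_of_forall_mem_subalgebra_integral_eq hK hμ hν hS hadjoin f.toContinuousMap

end MomentDeterminacy

section MixedMoments

variable {n t : ℕ}

noncomputable def prodCoordinate (n t : ℕ) :
    Fin n ⊕ Fin t → C((Fin n → ℝ) × (Fin t → ℝ), ℝ) :=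
  Sum.elim (fun i => ⟨fun q => q.1 i, by fun_prop⟩) (fun j => ⟨fun q => q.2 j, by fun_prop⟩)

theorem separatesPoints_adjoin_range_prodCoordinate :
    (Algebra.adjoin ℝ (Set.range (prodCoordinate n t))).SeparatesPoints := by
  intro p q hpq
  have hcoord : ∃ c, prodCoordinate n t c p ≠ prodCoordinate n t c q := by
    by_contra! h
    exact hpq (Prod.ext (funext fun i => h (.inl i)) (funext fun j => h (.inr j)))
  obtain ⟨c, hc⟩ := hcoord
  exact ⟨_, ⟨_, Algebra.subset_adjoin ⟨c, rfl⟩, rfl⟩, hc⟩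

theorem exists_eq_monomial_of_mem_closure_range_prodCoordinate
    {u : C((Fin n → ℝ) × (Fin t → ℝ), ℝ)}
    (hu : u ∈ Submonoid.closure (Set.range (prodCoordinate n t))) :
    ∃ (α : Fin n → ℕ) (γ : Fin t → ℕ), ⇑u = fun q => (∏ i, q.1 i ^ α i) * ∏ j, q.2 j ^ γ j := by
  induction hu using Submonoid.closure_induction with
  | mem u hu =>
    obtain ⟨c | c, rfl⟩ := hu
    · exact ⟨Pi.single c 1, 0, by ext q; simp [prodCoordinate, Pi.single_apply, pow_ite]⟩
    · exact ⟨0, Pi.single c 1, by ext q; simp [prodCoordinate, Pi.single_apply, pow_ite]⟩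
  | one => exact ⟨0, 0, by ext q; simp⟩
  | mul u v _ _ hu hv =>
    obtain ⟨α₁, γ₁, hu⟩ := hu
    obtain ⟨α₂, γ₂, hv⟩ := hv
    refine ⟨α₁ + α₂, γ₁ + γ₂, ?_⟩
    ext q
    simp only [ContinuousMap.mul_apply, hu, hv, Pi.add_apply, pow_add, Finset.prod_mul_distrib]
    ring

theorem ext_of_mixedMoments_eq {μ ν : Measure ((Fin n → ℝ) × (Fin t → ℝ))} [IsFiniteMeasure μ]
    [IsFiniteMeasure ν] {K : Set ((Fin n → ℝ) × (Fin t → ℝ))} (hK : IsCompact K)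
    (hμ : μ Kᶜ = 0) (hν : ν Kᶜ = 0)
    (heq : ∀ (α : Fin n → ℕ) (γ : Fin t → ℕ),
      ∫ q, (∏ i, q.1 i ^ α i) * ∏ j, q.2 j ^ γ j ∂μ =
        ∫ q, (∏ i, q.1 i ^ α i) * ∏ j, q.2 j ^ γ j ∂ν) :
    μ = ν := by
  refine ext_of_forall_mem_closure_integral_eq_of_isCompact hK hμ hν
    separatesPoints_adjoin_range_prodCoordinate fun m hm => ?_
  obtain ⟨α, γ, hm⟩ := exists_eq_monomial_of_mem_closure_range_prodCoordinate hm
  simpa only [hm] using heq α γ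

end MixedMoments

theorem integral_withDensity_ofReal {α : Type*} [MeasurableSpace α] {μ : Measure α}
    {η : α → ℝ} (hη : Measurable η) (hη0 : ∀ x, 0 ≤ η x) (g : α → ℝ) :
    ∫ x, g x ∂μ.withDensity (fun x => ENNReal.ofReal (η x)) = ∫ x, g x * η x ∂μ := by
  rw [integral_withDensity_eq_integral_toReal_smul (by fun_prop)
    (.of_forall fun _ => ENNReal.ofReal_lt_top)]
  simp only [ENNReal.toReal_ofReal (hη0 _), smul_eq_mul, mul_comm]

theorem conditional_is_dirac_general {n t : ℕ}
    (X : Set (Fin n → ℝ)) (hX : IsCompact X)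
    (A : Set (Fin t → ℝ)) (hA : IsCompact A)
    (lam : Measure (Fin n → ℝ))
    (ν : Measure ((Fin n → ℝ) × (Fin t → ℝ))) [IsFiniteMeasure ν]
    (hνsupp : ν (X ×ˢ A)ᶜ = 0)
    (η : (Fin n → ℝ) → ℝ) (hηmeas : Measurable η)
    (hη0 : ∀ x, 0 ≤ η x)
    (hmarg : ν.map Prod.fst = lam.withDensity fun x => ENNReal.ofReal (η x))
    (asel : (Fin n → ℝ) → (Fin t → ℝ)) (haselmeas : Measurable asel)
    (haselA : ∀ x ∈ X, asel x ∈ A)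
    (hmoments : ∀ (α : Fin n → ℕ) (γ : Fin t → ℕ),
      (∫ q, ((∏ i, q.1 i ^ α i) * ∏ i, q.2 i ^ γ i) ∂ν) =
        ∫ x, ((∏ i, x i ^ α i) * (∏ i, asel x i ^ γ i) * η x) ∂lam) :
    ∀ᵐ x ∂(ν.map Prod.fst), ν.condKernel x = Measure.dirac (asel x) := by
  have hgraph : Measurable fun x => (x, asel x) := measurable_id.prodMk haselmeas
  have hXc : ν.map Prod.fst Xᶜ = 0 := by
    rw [Measure.map_apply measurable_fst hX.isClosed.measurableSet.compl]
    exact measure_mono_null (fun q (hq : q.1 ∉ X) (hqK : q ∈ X ×ˢ A) => hq hqK.1) hνsupp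
  have hgraph_supp : (ν.map Prod.fst).map (fun x => (x, asel x)) (X ×ˢ A)ᶜ = 0 := by
    rw [Measure.map_apply hgraph (hX.prod hA).isClosed.measurableSet.compl]
    exact measure_mono_null (fun x hx hxX => hx ⟨hxX, haselA x hxX⟩) hXc
  have hν : ν = ν.fst ⊗ₘ Kernel.deterministic asel haselmeas := by
    rw [Measure.compProd_deterministic]
    refine ext_of_mixedMoments_eq (hX.prod hA) hνsupp hgraph_supp fun α γ => ?_
    rw [hmoments, integral_map hgraph.aemeasurable (by fun_prop), Measure.fst, hmarg,
      integral_withDensity_ofReal hηmeas hη0]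
  filter_upwards [eq_condKernel_of_measure_eq_compProd _ hν] with x hx
  rw [← hx, Kernel.deterministic_apply]

/-- If the `x`-marginal of `ν` on `X × A` has density `η` (with `0 ≤ η ≤ 1`)
w.r.t. `λ`, and the mixed moments of `ν` agree with those of the graph measure of
a measurable map `x ↦ a(x) ∈ A` (with `A` compact), then the conditional
probability `ν̂(da|x)` equals the Dirac measure `δ_{a(x)}` for `ν_x`-a.e. `x`. -/
theorem conditional_is_dirac {n t : ℕ}
    (X : Set (Fin n → ℝ)) (hX : IsCompact X)
    (A : Set (Fin t → ℝ)) (hA : IsCompact A)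
    (lam : Measure (Fin n → ℝ)) (hlam : lam = volume.restrict X)
    (ν : Measure ((Fin n → ℝ) × (Fin t → ℝ))) [IsFiniteMeasure ν]
    (hνsupp : ν (X ×ˢ A)ᶜ = 0)
    (η : (Fin n → ℝ) → ℝ) (hηmeas : Measurable η)
    (hη0 : ∀ x, 0 ≤ η x) (hη1 : ∀ x, η x ≤ 1)
    (hmarg : ν.map Prod.fst = lam.withDensity fun x => ENNReal.ofReal (η x))
    (asel : (Fin n → ℝ) → (Fin t → ℝ)) (haselmeas : Measurable asel)
    (haselA : ∀ x ∈ X, asel x ∈ A)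
    (hmoments : ∀ (α : Fin n → ℕ) (γ : Fin t → ℕ),
      (∫ q, ((∏ i, q.1 i ^ α i) * ∏ i, q.2 i ^ γ i) ∂ν) =
        ∫ x, ((∏ i, x i ^ α i) * (∏ i, asel x i ^ γ i) * η x) ∂lam) :
    ∀ᵐ x ∂(ν.map Prod.fst), ν.condKernel x = Measure.dirac (asel x) :=
  conditional_is_dirac_general X hX A hA lam ν hνsupp η hηmeas hη0 hmarg asel haselmeas haselA
    hmoments
end

section
/- (Optimal value of the ideal LP.) Suppose x ↦ a(x) ∈ A and x ↦ κ(x) = μ_{a(x)}(K_x) = max_{a∈A} μ_a(K_x) are measurable. Then the infinite-dimensional LP sup{φ(K) : φ ∈ M₊(K), ψ ∈ P(X×A), φ ≤ T*ψ, ψ_x = λ} has optimal value ρ = ∫_X κ(x) dλ(x), attained at dφ*(x,ω) = 1_K(x,ω) μ_{a(x)}(dω) λ(dx) and dψ*(x,a) = δ_{a(x)}(da) λ(dx). -/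
/-!
For a feasible pair, `φ(K) ≤ ν(K) = ∫ μ_a(K_x) dψ ≤ ∫ κ(x) dψ = ∫ κ dλ`, because
`μ_a(K_x) ≤ κ(x)` on `X × A` and `ψ` has `x`-marginal `λ`; for the pair built from the
selector `a(x)` both inequalities are equalities. The only technical point is measurability
in `x` of `μ_{a(x)}(K_x)` and of `δ_x ⊗ μ_{a(x)}`: the family `(μ_a)` may be infinite off `A`,
so it is replaced by a finite kernel agreeing with it on `A`, hence `λ`-a.e. along `a(x)`.
-/

open MeasureTheory ProbabilityTheory
open scoped ENNReal

section
variable {α β γ : Type*} [MeasurableSpace α] [MeasurableSpace β]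

lemma Measurable.exists_isFiniteKernel_eqOn {μ : α → Measure β} (hμ : Measurable μ)
    {A : Set α} (hA : MeasurableSet A) (hprob : ∀ a ∈ A, IsProbabilityMeasure (μ a)) :
    ∃ η : Kernel α β, IsFiniteKernel η ∧ Set.EqOn η μ A := by
  classical
  refine ⟨Kernel.piecewise hA ⟨μ, hμ⟩ 0, ⟨1, ENNReal.one_lt_top, fun a => ?_⟩,
    fun a ha => by simp [Kernel.piecewise_apply, ha]⟩
  by_cases ha : a ∈ A
  · simp [Kernel.piecewise_apply, ha, (hprob a ha).measure_univ]
  · simp [Kernel.piecewise_apply, ha]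

lemma ProbabilityTheory.Kernel.measurable_map_prodMk (κ : Kernel α β) [IsSFiniteKernel κ] :
    Measurable fun x => (κ x).map (Prod.mk x) := by
  refine Measure.measurable_of_measurable_coe _ fun s hs => ?_
  simp_rw [Measure.map_apply measurable_prodMk_left hs]
  exact κ.measurable_kernel_prodMk_left hs

lemma lintegral_le_lintegral_of_map_fst_eq [MeasurableSpace γ] {m : Measure α}
    {ψ : Measure (α × γ)} (hψ : ψ.map Prod.fst = m) {F : α × γ → ℝ≥0∞} {G : α → ℝ≥0∞}
    (hG : AEMeasurable G m) (hFG : ∀ᵐ q ∂ψ, F q ≤ G q.1) :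
    ∫⁻ q, F q ∂ψ ≤ ∫⁻ x, G x ∂m := by
  subst hψ
  calc ∫⁻ q, F q ∂ψ ≤ ∫⁻ q, G q.1 ∂ψ := lintegral_mono_ae hFG
    _ = ∫⁻ x, G x ∂ψ.map Prod.fst := (lintegral_map' hG measurable_fst.aemeasurable).symm

variable {m : Measure α} {ν : α → Measure β} {κ : Kernel α β} [IsSFiniteKernel κ]

lemma aemeasurable_map_prodMk_of_ae_eq_kernel (h : ν =ᵐ[m] κ) :
    AEMeasurable (fun x => (ν x).map (Prod.mk x)) m :=
  κ.measurable_map_prodMk.aemeasurable.congr <| h.mono fun x hx =>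
    show (κ x).map (Prod.mk x) = (ν x).map (Prod.mk x) by rw [hx]

lemma aemeasurable_measure_prodMk_preimage_of_ae_eq_kernel (h : ν =ᵐ[m] κ)
    {s : Set (α × β)} (hs : MeasurableSet s) :
    AEMeasurable (fun x => ν x (Prod.mk x ⁻¹' s)) m := by
  simpa only [Function.comp_def, Measure.map_apply measurable_prodMk_left hs] using
    (Measure.measurable_coe hs).comp_aemeasurable (aemeasurable_map_prodMk_of_ae_eq_kernel h)

lemma bind_map_prodMk_apply_of_ae_eq_kernel (h : ν =ᵐ[m] κ)
    {s : Set (α × β)} (hs : MeasurableSet s) :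
    (m.bind fun x => (ν x).map (Prod.mk x)) s = ∫⁻ x, ν x (Prod.mk x ⁻¹' s) ∂m := by
  rw [Measure.bind_apply hs (aemeasurable_map_prodMk_of_ae_eq_kernel h)]
  simp only [Measure.map_apply measurable_prodMk_left hs]

end

theorem ideal_LP_optimal_value_general {n p t : ℕ}
    (X : Set (Fin n → ℝ)) (hX : IsCompact X)
    (A : Set (Fin t → ℝ)) (hA : IsCompact A)
    (K : Set ((Fin n → ℝ) × (Fin p → ℝ)))
    (hKmeas : MeasurableSet K)
    (μa : (Fin t → ℝ) → Measure (Fin p → ℝ))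
    (hprob : ∀ a ∈ A, IsProbabilityMeasure (μa a))
    (hmeas : ∀ B : Set (Fin p → ℝ), MeasurableSet B → Measurable fun a => μa a B)
    (lam : Measure (Fin n → ℝ)) [IsProbabilityMeasure lam] (hlamX : lam Xᶜ = 0)
    (asel : (Fin n → ℝ) → (Fin t → ℝ)) (haselmeas : Measurable asel)
    (haselA : ∀ x ∈ X, asel x ∈ A)
    (hmax : ∀ x ∈ X, ∀ a ∈ A, μa a {ω | (x, ω) ∈ K} ≤ μa (asel x) {ω | (x, ω) ∈ K}) :
    -- (1) every feasible pair is dominated by ρ = ∫_X κ dλ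
    (∀ (φ : Measure ((Fin n → ℝ) × (Fin p → ℝ))), IsFiniteMeasure φ → φ Kᶜ = 0 →
      ∀ (ψ : Measure ((Fin n → ℝ) × (Fin t → ℝ))), IsProbabilityMeasure ψ →
        ψ (X ×ˢ A)ᶜ = 0 → ψ.map Prod.fst = lam →
        ∀ (ν : Measure ((Fin n → ℝ) × (Fin p → ℝ))),
          (∀ s : Set ((Fin n → ℝ) × (Fin p → ℝ)), MeasurableSet s →
            ν s = ∫⁻ q, μa q.2 {ω | (q.1, ω) ∈ s} ∂ψ) →
          φ ≤ ν →
          φ K ≤ ∫⁻ x, μa (asel x) {ω | (x, ω) ∈ K} ∂lam) ∧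
    -- (2) the pair (φ*, ψ*) is feasible and attains ρ
    (let φstar : Measure ((Fin n → ℝ) × (Fin p → ℝ)) :=
        (lam.bind fun x => (μa (asel x)).map fun ω => (x, ω)).restrict K
      let ψstar : Measure ((Fin n → ℝ) × (Fin t → ℝ)) :=
        lam.map fun x => (x, asel x)
      let νstar : Measure ((Fin n → ℝ) × (Fin p → ℝ)) :=
        lam.bind fun x => (μa (asel x)).map fun ω => (x, ω)
      φstar Kᶜ = 0 ∧
      IsProbabilityMeasure ψstar ∧
      ψstar (X ×ˢ A)ᶜ = 0 ∧
      ψstar.map Prod.fst = lam ∧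
      (∀ s : Set ((Fin n → ℝ) × (Fin p → ℝ)), MeasurableSet s →
        νstar s = ∫⁻ q, μa q.2 {ω | (q.1, ω) ∈ s} ∂ψstar) ∧
      φstar ≤ νstar ∧
      φstar K = ∫⁻ x, μa (asel x) {ω | (x, ω) ∈ K} ∂lam) := by
  have hμa : Measurable μa := Measure.measurable_of_measurable_coe _ hmeas
  obtain ⟨η, hη, hημa⟩ := hμa.exists_isFiniteKernel_eqOn hA.measurableSet hprob
  have hsel : (fun x => μa (asel x)) =ᵐ[lam] η.comap asel haselmeas :=
    (ae_iff.2 hlamX).mono fun x hx => (hημa (haselA x hx)).symm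
  refine ⟨fun φ _ _ ψ _ hψXA hψ ν hν hφν => ?_, ?_⟩
  · calc φ K ≤ ν K := hφν K
      _ = ∫⁻ q, μa q.2 {ω | (q.1, ω) ∈ K} ∂ψ := hν K hKmeas
      _ ≤ ∫⁻ x, μa (asel x) {ω | (x, ω) ∈ K} ∂lam :=
        lintegral_le_lintegral_of_map_fst_eq hψ
          (aemeasurable_measure_prodMk_preimage_of_ae_eq_kernel hsel hKmeas)
          ((ae_iff.2 hψXA).mono fun q hq => hmax _ hq.1 _ hq.2)
  · intro φstar ψstar νstar
    have hgraph : Measurable fun x => (x, asel x) := measurable_id.prodMk haselmeas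
    have hψstarXA : ψstar (X ×ˢ A)ᶜ = 0 := by
      rw [Measure.map_apply hgraph (hX.measurableSet.prod hA.measurableSet).compl]
      exact measure_mono_null (fun x hx hxX => hx ⟨hxX, haselA x hxX⟩) hlamX
    have hνstar : ∀ s, MeasurableSet s →
        νstar s = ∫⁻ x, μa (asel x) {ω | (x, ω) ∈ s} ∂lam :=
      fun s hs => bind_map_prodMk_apply_of_ae_eq_kernel hsel hs
    refine ⟨ae_restrict_mem hKmeas, Measure.isProbabilityMeasure_map hgraph.aemeasurable,
      hψstarXA, (Measure.fst_map_prodMk haselmeas).trans Measure.map_id, fun s hs => ?_,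
      Measure.restrict_le_self, by rw [Measure.restrict_apply_self, hνstar K hKmeas]⟩
    have hsnd : Measurable (Prod.snd : (Fin n → ℝ) × (Fin t → ℝ) → _) := measurable_snd
    have hsel' : (fun q => μa q.2) =ᵐ[ψstar] η.comap Prod.snd hsnd :=
      (ae_iff.2 hψstarXA).mono fun q hq => (hημa hq.2).symm
    have hs' :
        MeasurableSet {r : ((Fin n → ℝ) × (Fin t → ℝ)) × (Fin p → ℝ) | (r.1.1, r.2) ∈ s} :=
      (measurable_fst.comp measurable_fst).prodMk measurable_snd hs
    rw [hνstar s hs]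
    exact (lintegral_map' (aemeasurable_measure_prodMk_preimage_of_ae_eq_kernel hsel' hs')
      hgraph.aemeasurable).symm

/-- Optimal value of the ideal infinite-dimensional LP. Given a measurable
selector `x ↦ a(x)` attaining `κ(x) = μ_{a(x)}(K_x) = max_{a∈A} μ_a(K_x)`, every
feasible pair `(φ, ψ)` (with `φ ≤ T*ψ` and `ψ` having `x`-marginal `λ`) satisfies
`φ(K) ≤ ∫_X κ dλ`, and the pair `(φ*, ψ*)` with
`dφ* = 1_K μ_{a(x)}(dω) λ(dx)` and `dψ* = δ_{a(x)}(da) λ(dx)` is feasible and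
attains the value `ρ = ∫_X κ dλ`. -/
theorem ideal_LP_optimal_value {n p t : ℕ}
    (X : Set (Fin n → ℝ)) (hX : IsCompact X)
    (A : Set (Fin t → ℝ)) (hA : IsCompact A)
    (Ω : Set (Fin p → ℝ))
    (f : MvPolynomial (Fin n ⊕ Fin p) ℝ)
    (K : Set ((Fin n → ℝ) × (Fin p → ℝ)))
    (hKdef : K = {q | q.1 ∈ X ∧ q.2 ∈ Ω ∧ MvPolynomial.eval (Sum.elim q.1 q.2) f ≤ 0})
    (hKmeas : MeasurableSet K)
    (μa : (Fin t → ℝ) → Measure (Fin p → ℝ))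
    (hprob : ∀ a ∈ A, IsProbabilityMeasure (μa a))
    (hmeas : ∀ B : Set (Fin p → ℝ), MeasurableSet B → Measurable fun a => μa a B)
    (lam : Measure (Fin n → ℝ)) [IsProbabilityMeasure lam] (hlamX : lam Xᶜ = 0)
    (asel : (Fin n → ℝ) → (Fin t → ℝ)) (haselmeas : Measurable asel)
    (haselA : ∀ x ∈ X, asel x ∈ A)
    (hmax : ∀ x ∈ X, ∀ a ∈ A, μa a {ω | (x, ω) ∈ K} ≤ μa (asel x) {ω | (x, ω) ∈ K}) :
    -- (1) every feasible pair is dominated by ρ = ∫_X κ dλ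
    (∀ (φ : Measure ((Fin n → ℝ) × (Fin p → ℝ))), IsFiniteMeasure φ → φ Kᶜ = 0 →
      ∀ (ψ : Measure ((Fin n → ℝ) × (Fin t → ℝ))), IsProbabilityMeasure ψ →
        ψ (X ×ˢ A)ᶜ = 0 → ψ.map Prod.fst = lam →
        ∀ (ν : Measure ((Fin n → ℝ) × (Fin p → ℝ))),
          (∀ s : Set ((Fin n → ℝ) × (Fin p → ℝ)), MeasurableSet s →
            ν s = ∫⁻ q, μa q.2 {ω | (q.1, ω) ∈ s} ∂ψ) →
          φ ≤ ν →
          φ K ≤ ∫⁻ x, μa (asel x) {ω | (x, ω) ∈ K} ∂lam) ∧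
    -- (2) the pair (φ*, ψ*) is feasible and attains ρ
    (let φstar : Measure ((Fin n → ℝ) × (Fin p → ℝ)) :=
        (lam.bind fun x => (μa (asel x)).map fun ω => (x, ω)).restrict K
      let ψstar : Measure ((Fin n → ℝ) × (Fin t → ℝ)) :=
        lam.map fun x => (x, asel x)
      let νstar : Measure ((Fin n → ℝ) × (Fin p → ℝ)) :=
        lam.bind fun x => (μa (asel x)).map fun ω => (x, ω)
      φstar Kᶜ = 0 ∧
      IsProbabilityMeasure ψstar ∧
      ψstar (X ×ˢ A)ᶜ = 0 ∧
      ψstar.map Prod.fst = lam ∧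
      (∀ s : Set ((Fin n → ℝ) × (Fin p → ℝ)), MeasurableSet s →
        νstar s = ∫⁻ q, μa q.2 {ω | (q.1, ω) ∈ s} ∂ψstar) ∧
      φstar ≤ νstar ∧
      φstar K = ∫⁻ x, μa (asel x) {ω | (x, ω) ∈ K} ∂lam) :=
  ideal_LP_optimal_value_general X hX A hA K hKmeas μa hprob hmeas lam hlamX asel haselmeas haselA
    hmax
end
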